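/- arXiv:2510.22157 — 4 statements merged into one kernel-verified Lean document; each statement's English description precedes it below -/
import Mathlib

section
/- For every i ∈ {1,…,d}, the i-th entry of the diagonal estimator is an unbiased estimator of the i-th diagonal entry of the tensor: E[y_i] = a_{i,…,i}. -/
/-!
Expand `y_i` by linearity. Each summand is a monomial in the independent family `g^{(t)}_k`, in
which `g^{(t)}_k` occurs with exponent `[k = j_t] + [k = i] ≤ 2`, so its expectation is the product
of the moments `E[g⁰] = 1`, `E[g¹] = 0`, `E[g²] = 1`. It vanishes as soon as some `j_t ≠ i`, since
then `g^{(t)}_i` occurs exactly once; only the summand `j = (i, …, i)` survives, with weight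
`a_{i,…,i}`.
-/

open MeasureTheory ProbabilityTheory Finset

/-- The diagonal estimator: `y i = Σ_j a_{j_1,…,j_{N-1},i} ∏_t g^{(t)}_{j_t} g^{(t)}_i`,
where the tensor has order `N = M + 1`. -/
noncomputable def diagEstimator {M d : ℕ} (a : (Fin (M + 1) → Fin d) → ℝ)
    {Ω : Type*} (g : Fin M → Fin d → Ω → ℝ) (i : Fin d) (ω : Ω) : ℝ :=
  ∑ j : Fin M → Fin d, a (Fin.snoc j i) * ∏ t : Fin M, g t (j t) ω * g t i ω

section IndependentProducts

variable {ι Ω : Type*} {mΩ : MeasurableSpace Ω} {μ : Measure Ω} {X : ι → Ω → ℝ}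

lemma ProbabilityTheory.iIndepFun.integrable_finset_prod (hX : iIndepFun X μ)
    (hint : ∀ i, Integrable (X i) μ) (s : Finset ι) :
    Integrable (fun ω => ∏ i ∈ s, X i ω) μ := by
  classical
  have := hX.isProbabilityMeasure
  induction s using Finset.induction with
  | empty => simp
  | insert a s ha ih =>
    have hindep := hX.indepFun_finsetProd_of_notMem₀ (fun i => (hint i).aemeasurable) ha
    convert hindep.integrable_mul (by rwa [prod_fn]) (hint a) using 1
    ext ω
    simp [prod_insert ha, mul_comm]

variable [Fintype ι]

lemma ProbabilityTheory.iIndepFun.integrable_prod_pow (hX : iIndepFun X μ) (e : ι → ℕ)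
    (hint : ∀ i, Integrable (fun ω => X i ω ^ e i) μ) :
    Integrable (fun ω => ∏ i, X i ω ^ e i) μ :=
  (hX.comp (fun i x => x ^ e i) fun _ => measurable_id.pow_const _).integrable_finset_prod
    hint univ

lemma ProbabilityTheory.iIndepFun.integral_prod_pow (hX : iIndepFun X μ)
    (hm : ∀ i, AEMeasurable (X i) μ) (e : ι → ℕ) :
    ∫ ω, ∏ i, X i ω ^ e i ∂μ = ∏ i, ∫ ω, X i ω ^ e i ∂μ :=
  hX.integral_fun_prod_comp hm fun i => (continuous_pow (e i)).aestronglyMeasurable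

end IndependentProducts

section StandardizedMoments

variable {Ω : Type*} {mΩ : MeasurableSpace Ω} {μ : Measure Ω} [IsProbabilityMeasure μ]
  {X : Ω → ℝ}

lemma integrable_pow_of_integral_sq_eq_one (hX : AEStronglyMeasurable X μ)
    (h2 : ∫ ω, X ω ^ 2 ∂μ = 1) {n : ℕ} (hn : n ≤ 2) :
    Integrable (fun ω => X ω ^ n) μ := by
  -- a non-integrable function has Bochner integral `0`, not `1`
  have hsq : Integrable (fun ω => X ω ^ 2) μ := .of_integral_ne_zero (by simp [h2])
  interval_cases n
  · simp
  · simpa using ((memLp_two_iff_integrable_sq hX).2 hsq).integrable one_le_two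
  · exact hsq

lemma integral_pow_of_integral_eq_zero_of_integral_sq_eq_one (h1 : ∫ ω, X ω ∂μ = 0)
    (h2 : ∫ ω, X ω ^ 2 ∂μ = 1) {n : ℕ} (hn : n ≤ 2) :
    ∫ ω, X ω ^ n ∂μ = if n = 1 then 0 else 1 := by
  interval_cases n <;> simp [h1, h2]

end StandardizedMoments

section DiagExponent

variable {ι κ : Type*} [DecidableEq κ]

def diagExponent (j : ι → κ) (i : κ) (p : ι × κ) : ℕ :=
  (if j p.1 = p.2 then 1 else 0) + (if i = p.2 then 1 else 0)

lemma diagExponent_le_two (j : ι → κ) (i : κ) (p : ι × κ) : diagExponent j i p ≤ 2 := by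
  unfold diagExponent
  split_ifs <;> norm_num

variable [Fintype ι] [Fintype κ]

lemma prod_mul_eq_prod_pow_diagExponent {R : Type*} [CommMonoid R] (x : ι → κ → R)
    (j : ι → κ) (i : κ) :
    ∏ t, x t (j t) * x t i = ∏ p : ι × κ, x p.1 p.2 ^ diagExponent j i p := by
  simp only [Fintype.prod_prod_type, diagExponent, pow_add, prod_mul_distrib, prod_pow_boole,
    mem_univ, if_true]

lemma prod_ite_diagExponent (j : ι → κ) (i : κ) :
    ∏ p, (if diagExponent j i p = 1 then (0 : ℝ) else 1) = if j = fun _ => i then 1 else 0 := by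
  split_ifs with hj
  · subst hj
    refine prod_eq_one fun p _ => if_neg ?_
    unfold diagExponent
    split_ifs <;> simp
  · obtain ⟨t, ht⟩ : ∃ t, j t ≠ i := by simpa [funext_iff] using hj
    exact prod_eq_zero (mem_univ (t, i)) (if_pos (by simp [diagExponent, ht]))

end DiagExponent

section DiagMonomial

variable {ι κ Ω : Type*} [Fintype ι] [Fintype κ] [DecidableEq κ] {mΩ : MeasurableSpace Ω}
  {μ : Measure Ω} [IsProbabilityMeasure μ] {g : ι → κ → Ω → ℝ}

lemma integrable_diag_monomial (hm : ∀ t k, AEStronglyMeasurable (g t k) μ)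
    (hindep : iIndepFun (fun p : ι × κ => g p.1 p.2) μ) (h2 : ∀ t k, ∫ ω, g t k ω ^ 2 ∂μ = 1)
    (j : ι → κ) (i : κ) :
    Integrable (fun ω => ∏ t, g t (j t) ω * g t i ω) μ := by
  have hmonomial ω := prod_mul_eq_prod_pow_diagExponent (g · · ω) j i
  simp only [hmonomial]
  exact hindep.integrable_prod_pow _ fun p =>
    integrable_pow_of_integral_sq_eq_one (hm _ _) (h2 _ _) (diagExponent_le_two j i p)

lemma integral_diag_monomial (hm : ∀ t k, AEStronglyMeasurable (g t k) μ)
    (hindep : iIndepFun (fun p : ι × κ => g p.1 p.2) μ) (h1 : ∀ t k, ∫ ω, g t k ω ∂μ = 0)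
    (h2 : ∀ t k, ∫ ω, g t k ω ^ 2 ∂μ = 1) (j : ι → κ) (i : κ) :
    ∫ ω, ∏ t, g t (j t) ω * g t i ω ∂μ = if j = fun _ => i then 1 else 0 := by
  have hmonomial ω := prod_mul_eq_prod_pow_diagExponent (g · · ω) j i
  simp only [hmonomial,
    hindep.integral_prod_pow (fun p => (hm _ _).aemeasurable),
    integral_pow_of_integral_eq_zero_of_integral_sq_eq_one (h1 _ _) (h2 _ _)
      (diagExponent_le_two j i _)]
  exact prod_ite_diagExponent j i

end DiagMonomial

theorem diag_estimator_unbiased_general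
    {M d : ℕ}
    (a : (Fin (M + 1) → Fin d) → ℝ)
    {Ω : Type*} [MeasureSpace Ω] [IsProbabilityMeasure (ℙ : Measure Ω)]
    (g : Fin M → Fin d → Ω → ℝ)
    (hmeas : ∀ n i, Measurable (g n i))
    (hindep : iIndepFun (fun p : Fin M × Fin d => g p.1 p.2) ℙ)
    (hmean : ∀ n i, ∫ ω, g n i ω ∂ℙ = 0)
    (hsecond : ∀ n i, ∫ ω, (g n i ω) ^ 2 ∂ℙ = 1)
    (i : Fin d) :
    ∫ ω, diagEstimator a g i ω ∂ℙ = a (fun _ => i) := by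
  have hm n i : AEStronglyMeasurable (g n i) ℙ := (hmeas n i).aestronglyMeasurable
  calc ∫ ω, diagEstimator a g i ω ∂ℙ
      = ∑ j : Fin M → Fin d, a (Fin.snoc j i) * ∫ ω, ∏ t, g t (j t) ω * g t i ω ∂ℙ := by
        unfold diagEstimator
        rw [integral_finsetSum _ fun j _ =>
          (integrable_diag_monomial hm hindep hsecond j i).const_mul _]
        simp only [integral_const_mul]
    _ = ∑ j : Fin M → Fin d, a (Fin.snoc j i) * if j = fun _ => i then 1 else 0 := by
        simp only [integral_diag_monomial hm hindep hmean hsecond]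
    _ = a (fun _ => i) := by
        simp only [mul_ite, mul_one, mul_zero, sum_ite_eq', mem_univ, if_true]
        -- `Fin.init (fun _ => i)` is `fun _ => i` by definition
        exact congrArg a (Fin.snoc_init_self (α := fun _ => Fin d) fun _ => i)

theorem diag_estimator_unbiased
    {M d : ℕ} (hM : 1 ≤ M) (hd : 1 ≤ d)
    (a : (Fin (M + 1) → Fin d) → ℝ)
    {Ω : Type*} [MeasureSpace Ω] [IsProbabilityMeasure (ℙ : Measure Ω)]
    (g : Fin M → Fin d → Ω → ℝ)
    (hmeas : ∀ n i, Measurable (g n i))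
    (hindep : iIndepFun (fun p : Fin M × Fin d => g p.1 p.2) ℙ)
    (hident : ∀ n i n' i', IdentDistrib (g n i) (g n' i') ℙ ℙ)
    (hmean : ∀ n i, ∫ ω, g n i ω ∂ℙ = 0)
    (hsecond : ∀ n i, ∫ ω, (g n i ω) ^ 2 ∂ℙ = 1)
    (hfourth : ∀ n i, Integrable (fun ω => (g n i ω) ^ 4) ℙ)
    (i : Fin d) :
    ∫ ω, diagEstimator a g i ω ∂ℙ = a (fun _ => i) :=
  diag_estimator_unbiased_general a g hmeas hindep hmean hsecond i
end

section
/- For every i ∈ {1,…,d}, the variance of the i-th entry of the diagonal estimator equals Var(y_i) = Σ_{s=0}^{N−1} (E[z⁴])^s · ( Σ a²_{j_1,…,j_{N−1},i} ) − a²_{i,…,i}, where for each s the inner sum ranges over all tuples (j_1,…,j_{N−1}) ∈ {1,…,d}^{N−1} in which exactly s of the indices j_1,…,j_{N−1} are equal to i, and z is a random variable with the common distribution of the entries g^{(n)}_i. -/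
/-!
Write `y_i = ∑_j a_{j,i} X_j` with `X_j = ∏_t g^{(t)}_{j_t} g^{(t)}_i`. For different `t` the
factors of `X_j`, and of `X_j X_k`, are functions of disjoint blocks `(g^{(t)}_x)_x` of the
independent family, so their expectations factor over `t`. Within one block `E[g_x g_i] = δ_{xi}`,
while `E[g_x g_i g_y g_i]` vanishes unless `x = y`, and is then `E[z⁴]` or `1` according as `x = i`
or not. Hence `E[X_j] = 1` for the constant tuple `j ≡ i` and `0` otherwise, and the `X_j` are
orthogonal with `E[X_j²] = E[z⁴] ^ #{t | j_t = i}`. So `E[y_i] = a_{i,…,i}` and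
`E[y_i²] = ∑_j a_{j,i}² E[z⁴] ^ #{t | j_t = i}`, which grouped by that count is the formula.
-/

open MeasureTheory ProbabilityTheory Finset

namespace ProbabilityTheory

variable {Ω : Type*} {mΩ : MeasurableSpace Ω} {μ : Measure Ω}

lemma iIndepFun.curry {ι κ 𝓧 : Type*} [MeasurableSpace 𝓧] {X : ι → κ → Ω → 𝓧}
    (mX : ∀ i j, Measurable (X i j)) (h : iIndepFun (fun p : ι × κ ↦ X p.1 p.2) μ) :
    iIndepFun (fun i ω j ↦ X i j ω) μ := by
  have := h.isProbabilityMeasure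
  have _ i j := Measure.isProbabilityMeasure_map (μ := μ) (mX i j).aemeasurable
  have hblock i : μ.map (fun ω j ↦ X i j ω) = Measure.infinitePi (fun j ↦ μ.map (X i j)) :=
    (h.precomp (Prod.mk_right_injective i)).map_fun_eq_infinitePi_map (mX i)
  rw [iIndepFun_iff_map_fun_eq_infinitePi_map (fun i ↦ by fun_prop)]
  simp_rw [hblock]
  change μ.map (MeasurableEquiv.curry ι κ 𝓧 ∘ fun ω p ↦ X p.1 p.2 ω) = _
  have hpair : μ.map (fun ω p ↦ X p.1 p.2 ω) =
      Measure.infinitePi (fun p : ι × κ ↦ μ.map (X p.1 p.2)) :=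
    h.map_fun_eq_infinitePi_map (fun p ↦ mX p.1 p.2)
  rw [← Measure.map_map (by fun_prop) (by fun_prop), hpair]
  exact Measure.infinitePi_map_curry (fun i j ↦ μ.map (X i j))

lemma iIndepFun.integrable_finsetProd {ι : Type*} {Y : ι → Ω → ℝ} (hY : iIndepFun Y μ)
    (mY : ∀ i, Measurable (Y i)) (hint : ∀ i, Integrable (Y i) μ) (s : Finset ι) :
    Integrable (fun ω ↦ ∏ i ∈ s, Y i ω) μ := by
  have := hY.isProbabilityMeasure
  induction s using Finset.cons_induction with
  | empty => simp
  | cons i s hi ih =>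
    have hs : Integrable (∏ j ∈ s, Y j) μ := by simpa only [← Finset.prod_apply] using ih
    have := (hY.indepFun_finsetProd_of_notMem mY hi).symm.integrable_mul (hint i) hs
    convert this using 1
    ext ω
    simp only [prod_cons, Pi.mul_apply, Finset.prod_apply]

lemma integrable_mul_sq_of_integrable_pow_four {f h : Ω → ℝ} (hf : Measurable f)
    (hh : Measurable h) (hf4 : Integrable (fun ω ↦ f ω ^ 4) μ)
    (hh4 : Integrable (fun ω ↦ h ω ^ 4) μ) :
    Integrable (fun ω ↦ (f ω * h ω) ^ 2) μ := by
  have hf2 : MemLp (fun ω ↦ f ω ^ 2) 2 μ :=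
    (memLp_two_iff_integrable_sq (by fun_prop)).2 (by simpa only [← pow_mul] using hf4)
  have hh2 : MemLp (fun ω ↦ h ω ^ 2) 2 μ :=
    (memLp_two_iff_integrable_sq (by fun_prop)).2 (by simpa only [← pow_mul] using hh4)
  simp_rw [mul_pow]
  exact hf2.integrable_mul hh2

section Moments

variable {κ : Type*} {h : κ → Ω → ℝ}

lemma iIndepFun.integral_mul_comp_eq_zero (hind : iIndepFun h μ) (hmeas : ∀ x, Measurable (h x))
    {u v w : κ} (huv : u ≠ v) (huw : u ≠ w) (hmean : ∫ ω, h u ω ∂μ = 0)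
    {φ : ℝ × ℝ → ℝ} (hφ : Measurable φ) :
    ∫ ω, h u ω * φ (h v ω, h w ω) ∂μ = 0 := by
  have hpair : IndepFun (h u) (fun ω ↦ φ (h v ω, h w ω)) μ :=
    ((hind.indepFun_prodMk hmeas v w u huv.symm huw.symm).symm.comp measurable_id hφ :)
  rw [hpair.integral_fun_mul_eq_mul_integral (hmeas u).aestronglyMeasurable
    (hφ.comp ((hmeas v).prodMk (hmeas w))).aestronglyMeasurable, hmean, zero_mul]

variable [DecidableEq κ] (hind : iIndepFun h μ) (hmeas : ∀ x, Measurable (h x))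
  (hmean : ∀ x, ∫ ω, h x ω ∂μ = 0) (hsecond : ∀ x, ∫ ω, h x ω ^ 2 ∂μ = 1)
include hind hmeas hmean hsecond

lemma iIndepFun.integral_mul_eq_ite (x i : κ) :
    ∫ ω, h x ω * h i ω ∂μ = if x = i then 1 else 0 := by
  split_ifs with hxi
  · subst hxi
    simpa only [sq] using hsecond x
  · rw [(hind.indepFun hxi).integral_fun_mul_eq_mul_integral (hmeas x).aestronglyMeasurable
      (hmeas i).aestronglyMeasurable, hmean, zero_mul]

lemma iIndepFun.integral_mul_mul_mul_eq_ite (x y i : κ) :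
    ∫ ω, (h x ω * h i ω) * (h y ω * h i ω) ∂μ =
      if x = y then (if x = i then ∫ ω, h i ω ^ 4 ∂μ else 1) else 0 := by
  by_cases hxy : x = y
  · subst hxy
    rw [if_pos rfl]
    split_ifs with hxi
    · subst hxi
      exact integral_congr_ae (ae_of_all _ fun ω ↦ by ring)
    · have hsq : IndepFun (fun ω ↦ h x ω ^ 2) (fun ω ↦ h i ω ^ 2) μ :=
        (hind.indepFun hxi).comp (measurable_id.pow_const 2) (measurable_id.pow_const 2)
      calc ∫ ω, (h x ω * h i ω) * (h x ω * h i ω) ∂μ = ∫ ω, h x ω ^ 2 * h i ω ^ 2 ∂μ :=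
            integral_congr_ae (ae_of_all _ fun ω ↦ by ring)
        _ = 1 := by
          rw [hsq.integral_fun_mul_eq_mul_integral (by fun_prop) (by fun_prop), hsecond, hsecond,
            one_mul]
  · rw [if_neg hxy]
    -- whichever of `x, y` differs from `i` occurs only once, and its mean is zero
    by_cases hxi : x = i
    · subst hxi
      calc ∫ ω, (h x ω * h x ω) * (h y ω * h x ω) ∂μ
          = ∫ ω, h y ω * (fun p : ℝ × ℝ ↦ p.1 * p.2 ^ 2) (h x ω, h x ω) ∂μ :=
            integral_congr_ae (ae_of_all _ fun ω ↦ by ring)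
        _ = 0 := hind.integral_mul_comp_eq_zero hmeas (Ne.symm hxy) (Ne.symm hxy) (hmean y)
            (by fun_prop : Measurable fun p : ℝ × ℝ ↦ p.1 * p.2 ^ 2)
    · calc ∫ ω, (h x ω * h i ω) * (h y ω * h i ω) ∂μ
          = ∫ ω, h x ω * (fun p : ℝ × ℝ ↦ p.1 * p.2 ^ 2) (h y ω, h i ω) ∂μ :=
            integral_congr_ae (ae_of_all _ fun ω ↦ by ring)
        _ = 0 := hind.integral_mul_comp_eq_zero hmeas hxy hxi (hmean x)
            (by fun_prop : Measurable fun p : ℝ × ℝ ↦ p.1 * p.2 ^ 2)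

end Moments

end ProbabilityTheory

section DiagTerm

variable {Ω ι κ : Type*} {mΩ : MeasurableSpace Ω} {μ : Measure Ω} [Fintype ι]
  {g : ι → κ → Ω → ℝ}

def diagTerm (g : ι → κ → Ω → ℝ) (i : κ) (j : ι → κ) (ω : Ω) : ℝ :=
  ∏ t, g t (j t) ω * g t i ω

variable (hmeas : ∀ t x, Measurable (g t x))
  (hindep : iIndepFun (fun p : ι × κ ↦ g p.1 p.2) μ)
include hmeas hindep

lemma integral_prod_comp_blocks {φ : ι → (κ → ℝ) → ℝ} (hφ : ∀ t, Measurable (φ t)) :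
    ∫ ω, ∏ t, φ t (fun x ↦ g t x ω) ∂μ = ∏ t, ∫ ω, φ t (fun x ↦ g t x ω) ∂μ :=
  (hindep.curry hmeas).integral_fun_prod_comp
    (fun t ↦ (measurable_pi_lambda _ (hmeas t)).aemeasurable)
    (fun t ↦ (hφ t).aestronglyMeasurable)

lemma memLp_diagTerm (hfourth : ∀ t x, Integrable (fun ω ↦ g t x ω ^ 4) μ) (i : κ)
    (j : ι → κ) : MemLp (diagTerm g i j) 2 μ := by
  have hsq : iIndepFun (fun t ω ↦ (g t (j t) ω * g t i ω) ^ 2) μ :=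
    (hindep.curry hmeas).comp (fun t v ↦ (v (j t) * v i) ^ 2) (fun t ↦ by fun_prop)
  refine (memLp_two_iff_integrable_sq (by unfold diagTerm; fun_prop)).2 ?_
  simp_rw [diagTerm, ← Finset.prod_pow]
  exact hsq.integrable_finsetProd (fun t ↦ by fun_prop) (fun t ↦
    integrable_mul_sq_of_integrable_pow_four (hmeas _ _) (hmeas _ _) (hfourth _ _) (hfourth _ _)) _

variable [DecidableEq κ] (hmean : ∀ t x, ∫ ω, g t x ω ∂μ = 0)
  (hsecond : ∀ t x, ∫ ω, g t x ω ^ 2 ∂μ = 1)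
include hmean hsecond

lemma integral_diagTerm (i : κ) (j : ι → κ) :
    ∫ ω, diagTerm g i j ω ∂μ = if j = fun _ ↦ i then 1 else 0 := by
  have hblock t := hindep.precomp (Prod.mk_right_injective t)
  calc ∫ ω, diagTerm g i j ω ∂μ = ∏ t, ∫ ω, g t (j t) ω * g t i ω ∂μ :=
        integral_prod_comp_blocks hmeas hindep (φ := fun t v ↦ v (j t) * v i) (fun t ↦ by fun_prop)
    _ = ∏ t, if j t = i then 1 else 0 := Finset.prod_congr rfl fun t _ ↦
        (hblock t).integral_mul_eq_ite (hmeas t) (hmean t) (hsecond t) (j t) i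
    _ = if j = fun _ ↦ i then 1 else 0 := by
        simp only [prod_boole, mem_univ, true_implies, funext_iff]

lemma integral_diagTerm_mul_diagTerm {m4 : ℝ} {i : κ} (hm4 : ∀ t, ∫ ω, g t i ω ^ 4 ∂μ = m4)
    (j k : ι → κ) :
    ∫ ω, diagTerm g i j ω * diagTerm g i k ω ∂μ = if j = k then m4 ^ #{t | j t = i} else 0 := by
  have hblock t := hindep.precomp (Prod.mk_right_injective t)
  calc ∫ ω, diagTerm g i j ω * diagTerm g i k ω ∂μ
      = ∫ ω, ∏ t, (g t (j t) ω * g t i ω) * (g t (k t) ω * g t i ω) ∂μ := by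
        simp only [diagTerm, prod_mul_distrib]
    _ = ∏ t, ∫ ω, (g t (j t) ω * g t i ω) * (g t (k t) ω * g t i ω) ∂μ :=
        integral_prod_comp_blocks hmeas hindep (φ := fun t v ↦ (v (j t) * v i) * (v (k t) * v i))
          (fun t ↦ by fun_prop)
    _ = ∏ t, if j t = k t then (if j t = i then m4 else 1) else 0 := Finset.prod_congr rfl
        fun t _ ↦ by
          rw [(hblock t).integral_mul_mul_mul_eq_ite (hmeas t) (hmean t) (hsecond t), hm4]
    _ = if j = k then m4 ^ #{t | j t = i} else 0 := by
        rw [prod_ite_zero, prod_ite, prod_const, prod_const_one, mul_one]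
        simp only [mem_univ, forall_const, funext_iff]

end DiagTerm

lemma Finset.sum_mul_pow_eq_sum_range {α R : Type*} [CommSemiring R] (s : Finset α) (f : α → R)
    (m : R) {c : α → ℕ} {n : ℕ} (hc : ∀ j ∈ s, c j ≤ n) :
    ∑ j ∈ s, f j * m ^ c j = ∑ k ∈ range (n + 1), m ^ k * ∑ j ∈ s with c j = k, f j := by
  rw [← sum_fiberwise_of_maps_to (t := range (n + 1))
    (fun j hj ↦ mem_range.2 (Nat.lt_succ_of_le (hc j hj)))]
  refine sum_congr rfl fun k _ ↦ ?_
  rw [mul_sum]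
  refine sum_congr rfl fun j hj ↦ ?_
  rw [(mem_filter.1 hj).2, mul_comm]

lemma integral_sq_finsetSum_mul {Ω α : Type*} {mΩ : MeasurableSpace Ω} {μ : Measure Ω}
    (s : Finset α) {X : α → Ω → ℝ} (hX : ∀ j ∈ s, MemLp (X j) 2 μ) (c : α → ℝ) :
    ∫ ω, (∑ j ∈ s, c j * X j ω) ^ 2 ∂μ =
      ∑ j ∈ s, ∑ k ∈ s, c j * c k * ∫ ω, X j ω * X k ω ∂μ := by
  have hint : ∀ j ∈ s, ∀ k ∈ s, Integrable (fun ω ↦ c j * X j ω * (c k * X k ω)) μ :=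
    fun j hj k hk ↦ by
      simpa only [Pi.mul_apply, mul_mul_mul_comm] using
        ((hX j hj).integrable_mul (hX k hk)).const_mul (c j * c k)
  simp_rw [sq, sum_mul_sum]
  rw [integral_finsetSum _ fun j hj ↦ integrable_finsetSum _ (hint j hj)]
  refine sum_congr rfl fun j hj ↦ ?_
  rw [integral_finsetSum _ (hint j hj)]
  refine sum_congr rfl fun k _ ↦ ?_
  rw [← integral_const_mul]
  simp only [mul_mul_mul_comm]

section DiagEstimator

variable {M d : ℕ} {Ω : Type*} {mΩ : MeasurableSpace Ω} {μ : Measure Ω}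
  {g : Fin M → Fin d → Ω → ℝ} (a : (Fin (M + 1) → Fin d) → ℝ) (i : Fin d)

lemma diagEstimator_eq_sum :
    diagEstimator a g i = fun ω ↦ ∑ j, a (Fin.snoc j i) * diagTerm g i j ω := rfl

variable (hmeas : ∀ t x, Measurable (g t x))
  (hindep : iIndepFun (fun p : Fin M × Fin d ↦ g p.1 p.2) μ)
  (hfourth : ∀ t x, Integrable (fun ω ↦ g t x ω ^ 4) μ)
include hmeas hindep hfourth

lemma memLp_diagEstimator : MemLp (diagEstimator a g i) 2 μ := by
  rw [diagEstimator_eq_sum]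
  exact memLp_finsetSum _ fun j _ ↦ (memLp_diagTerm hmeas hindep hfourth i j).const_mul _

variable (hmean : ∀ t x, ∫ ω, g t x ω ∂μ = 0) (hsecond : ∀ t x, ∫ ω, g t x ω ^ 2 ∂μ = 1)
include hmean hsecond

lemma integral_diagEstimator : ∫ ω, diagEstimator a g i ω ∂μ = a (fun _ ↦ i) := by
  have := hindep.isProbabilityMeasure
  rw [diagEstimator_eq_sum, integral_finsetSum _ fun j _ ↦
    ((memLp_diagTerm hmeas hindep hfourth i j).integrable one_le_two).const_mul _]
  simp only [integral_const_mul, integral_diagTerm hmeas hindep hmean hsecond, mul_ite, mul_one,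
    mul_zero, sum_ite_eq', mem_univ, if_true]
  congr 1
  funext x
  induction x using Fin.lastCases <;> simp

lemma integral_sq_diagEstimator {m4 : ℝ} (hm4 : ∀ t, ∫ ω, g t i ω ^ 4 ∂μ = m4) :
    ∫ ω, diagEstimator a g i ω ^ 2 ∂μ = ∑ j, a (Fin.snoc j i) ^ 2 * m4 ^ #{t | j t = i} := by
  rw [diagEstimator_eq_sum,
    integral_sq_finsetSum_mul _ fun j _ ↦ memLp_diagTerm hmeas hindep hfourth i j]
  simp only [integral_diagTerm_mul_diagTerm hmeas hindep hmean hsecond hm4, mul_ite, mul_zero,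
    sum_ite_eq, mem_univ, if_true, sq]

end DiagEstimator

theorem diag_estimator_variance_general
    {M d : ℕ}
    (a : (Fin (M + 1) → Fin d) → ℝ)
    {Ω : Type*} [MeasureSpace Ω] [IsProbabilityMeasure (ℙ : Measure Ω)]
    (g : Fin M → Fin d → Ω → ℝ)
    (hmeas : ∀ n i, Measurable (g n i))
    (hindep : iIndepFun (fun p : Fin M × Fin d => g p.1 p.2) ℙ)
    (hmean : ∀ n i, ∫ ω, g n i ω ∂ℙ = 0)
    (hsecond : ∀ n i, ∫ ω, (g n i ω) ^ 2 ∂ℙ = 1)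
    (hfourth : ∀ n i, Integrable (fun ω => (g n i ω) ^ 4) ℙ)
    (m4 : ℝ) (hm4 : ∀ n i, ∫ ω, (g n i ω) ^ 4 ∂ℙ = m4)
    (i : Fin d) :
    variance (diagEstimator a g i) ℙ =
      (∑ s ∈ Finset.range (M + 1), m4 ^ s *
        (∑ j ∈ Finset.univ.filter (fun j : Fin M → Fin d =>
          (Finset.univ.filter (fun t => j t = i)).card = s), (a (Fin.snoc j i)) ^ 2)) -
      (a (fun _ => i)) ^ 2 := by
  have hcount (j : Fin M → Fin d) : #{t | j t = i} ≤ M :=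
    (card_filter_le _ _).trans (card_fin M).le
  rw [variance_eq_sub (memLp_diagEstimator a i hmeas hindep hfourth)]
  simp only [Pi.pow_apply]
  rw [integral_sq_diagEstimator a i hmeas hindep hfourth hmean hsecond (hm4 · i),
    integral_diagEstimator a i hmeas hindep hfourth hmean hsecond,
    sum_mul_pow_eq_sum_range _ _ _ fun j _ ↦ hcount j]

theorem diag_estimator_variance
    {M d : ℕ} (hM : 1 ≤ M) (hd : 1 ≤ d)
    (a : (Fin (M + 1) → Fin d) → ℝ)
    {Ω : Type*} [MeasureSpace Ω] [IsProbabilityMeasure (ℙ : Measure Ω)]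
    (g : Fin M → Fin d → Ω → ℝ)
    (hmeas : ∀ n i, Measurable (g n i))
    (hindep : iIndepFun (fun p : Fin M × Fin d => g p.1 p.2) ℙ)
    (hident : ∀ n i n' i', IdentDistrib (g n i) (g n' i') ℙ ℙ)
    (hmean : ∀ n i, ∫ ω, g n i ω ∂ℙ = 0)
    (hsecond : ∀ n i, ∫ ω, (g n i ω) ^ 2 ∂ℙ = 1)
    (hfourth : ∀ n i, Integrable (fun ω => (g n i ω) ^ 4) ℙ)
    (m4 : ℝ) (hm4 : ∀ n i, ∫ ω, (g n i ω) ^ 4 ∂ℙ = m4)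
    (i : Fin d) :
    variance (diagEstimator a g i) ℙ =
      (∑ s ∈ Finset.range (M + 1), m4 ^ s *
        (∑ j ∈ Finset.univ.filter (fun j : Fin M → Fin d =>
          (Finset.univ.filter (fun t => j t = i)).card = s), (a (Fin.snoc j i)) ^ 2)) -
      (a (fun _ => i)) ^ 2 :=
  diag_estimator_variance_general a g hmeas hindep hmean hsecond hfourth m4 hm4 i
end

section
/- If the entries g^{(n)}_i are i.i.d. Rademacher random variables (uniform on {−1,+1}), then for every i ∈ {1,…,d} the variance of the i-th entry of the diagonal estimator equals Var(y_i) = Σ_{(j_1,…,j_{N−1}) ∈ {1,…,d}^{N−1}} a²_{j_1,…,j_{N−1},i} − a²_{i,…,i}. -/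
open MeasureTheory ProbabilityTheory Finset

/-- The Rademacher distribution: uniform on `{-1, +1}`. -/
noncomputable def radMeasure : Measure ℝ :=
  (2 : ENNReal)⁻¹ • Measure.dirac 1 + (2 : ENNReal)⁻¹ • Measure.dirac (-1)
/-! The estimator is `y_i = ∑_j a_{j,i} X_j` with the Rademacher monomials
`X_j = ∏_t g^{(t)}_{j_t} g^{(t)}_i`. Writing a product of such monomials as
`∏_{t,m} (g^{(t)}_m)^{e_{t,m}}`, independence factors its expectation into the moments
`𝔼[g^n] = [n even]`, and all exponents are even exactly when the multi-indices agree. Hence the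
`X_j` are orthonormal in `L²` with `𝔼[X_j] = [j = (i, …, i)]`, so `𝔼[y_i] = a_{i,…,i}` and
`𝔼[y_i²] = ∑_j a_{j,i}²`. -/

lemma integral_radMeasure (f : ℝ → ℝ) : ∫ x, f x ∂radMeasure = (f 1 + f (-1)) / 2 := by
  have hint : ∀ y : ℝ, Integrable f ((2 : ENNReal)⁻¹ • Measure.dirac y) := fun y =>
    (integrable_dirac (by simp)).smul_measure (by simp)
  rw [radMeasure, integral_add_measure (hint 1) (hint (-1)), integral_smul_measure,
    integral_smul_measure, integral_dirac, integral_dirac]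
  simp only [ENNReal.toReal_inv, ENNReal.toReal_ofNat, smul_eq_mul]
  ring

lemma integral_pow_radMeasure (n : ℕ) :
    ∫ x, x ^ n ∂radMeasure = if Even n then 1 else 0 := by
  rw [integral_radMeasure]
  rcases n.even_or_odd with hn | hn
  · simp [hn, hn.neg_one_pow]
  · simp [hn.neg_one_pow, Nat.not_even_iff_odd.mpr hn]

lemma ae_abs_eq_one_radMeasure : ∀ᵐ x ∂radMeasure, |x| = 1 := by
  simp [radMeasure]

def graphIndicator {ι α : Type*} [DecidableEq α] (j : ι → α) (p : ι × α) : ℕ :=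
  if j p.1 = p.2 then 1 else 0

lemma forall_even_graphIndicator_add_iff {ι α : Type*} [DecidableEq α] (j k : ι → α) :
    (∀ p, Even (graphIndicator j p + graphIndicator k p)) ↔ j = k := by
  refine ⟨fun h => funext fun t => ?_, fun h p => h ▸ ⟨_, rfl⟩⟩
  by_contra hne
  simpa [graphIndicator, Ne.symm hne] using h (t, j t)

lemma prod_mul_eq_prod_pow_graphIndicator {ι α M : Type*} [Fintype ι] [Fintype α]
    [DecidableEq α] [CommMonoid M] (f : ι × α → M) (j l : ι → α) :
    ∏ t, f (t, j t) * f (t, l t) = ∏ p, f p ^ (graphIndicator j p + graphIndicator l p) := by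
  simp only [pow_add, Finset.prod_mul_distrib, Fintype.prod_prod_type, graphIndicator,
    Finset.prod_pow_boole, Finset.mem_univ, if_true]

lemma variance_sum_mul_of_orthonormal {Ω ι : Type*} [MeasurableSpace Ω] {μ : Measure Ω}
    [IsProbabilityMeasure μ] [Fintype ι] [DecidableEq ι] {X : ι → Ω → ℝ}
    (hX : ∀ j, MemLp (X j) 2 μ) (j₀ : ι) (hmean : ∀ j, μ[X j] = if j = j₀ then 1 else 0)
    (horth : ∀ j k, μ[X j * X k] = if j = k then 1 else 0) (c : ι → ℝ) :
    variance (fun ω => ∑ j, c j * X j ω) μ = ∑ j, c j ^ 2 - c j₀ ^ 2 := by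
  rw [variance_fun_sum fun j => (hX j).const_mul (c j)]
  simp_rw [covariance_const_mul_left, covariance_const_mul_right,
    covariance_eq_sub (hX _) (hX _), horth, hmean]
  simp [mul_sub, Finset.sum_sub_distrib, sq]

section Rademacher

variable {Ω : Type*} [MeasurableSpace Ω] {μ : Measure Ω}

lemma ae_abs_eq_one_of_map_eq_radMeasure {X : Ω → ℝ} (hX : AEMeasurable X μ)
    (hlaw : μ.map X = radMeasure) : ∀ᵐ ω ∂μ, |X ω| = 1 :=
  ae_of_ae_map hX (hlaw ▸ ae_abs_eq_one_radMeasure)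

lemma integral_pow_of_map_eq_radMeasure {X : Ω → ℝ} (hX : AEMeasurable X μ)
    (hlaw : μ.map X = radMeasure) (n : ℕ) :
    ∫ ω, X ω ^ n ∂μ = if Even n then 1 else 0 := by
  rw [← integral_pow_radMeasure, ← hlaw, integral_map hX (by fun_prop)]

variable {κ : Type*} [Fintype κ] {F : κ → Ω → ℝ}

lemma integral_prod_pow_of_iIndepFun (hF : ∀ p, AEMeasurable (F p) μ) (hind : iIndepFun F μ)
    (hlaw : ∀ p, μ.map (F p) = radMeasure) (e : κ → ℕ) :
    ∫ ω, ∏ p, F p ω ^ e p ∂μ = if ∀ p, Even (e p) then 1 else 0 := by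
  rw [hind.integral_fun_prod_comp (f := fun p x => x ^ e p) hF fun p => by fun_prop]
  simp_rw [integral_pow_of_map_eq_radMeasure (hF _) (hlaw _), Fintype.prod_boole]

lemma memLp_prod_pow_of_map_eq_radMeasure [IsFiniteMeasure μ] (hF : ∀ p, AEMeasurable (F p) μ)
    (hlaw : ∀ p, μ.map (F p) = radMeasure) (e : κ → ℕ) (q : ENNReal) :
    MemLp (fun ω => ∏ p, F p ω ^ e p) q μ := by
  refine MemLp.of_bound
    (Finset.aemeasurable_fun_prod _ fun p _ => (hF p).pow_const _).aestronglyMeasurable 1 ?_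
  filter_upwards [ae_all_iff.mpr fun p => ae_abs_eq_one_of_map_eq_radMeasure (hF p) (hlaw p)]
    with ω hω
  simp [hω]

end Rademacher

section RademacherMonomial

variable {Ω ι α : Type*} [MeasurableSpace Ω] {μ : Measure Ω} [Fintype ι] [Fintype α]
  [DecidableEq α] {F : ι × α → Ω → ℝ}

lemma memLp_prod_mul [IsFiniteMeasure μ] (hF : ∀ p, AEMeasurable (F p) μ)
    (hlaw : ∀ p, μ.map (F p) = radMeasure) (j l : ι → α) (q : ENNReal) :
    MemLp (fun ω => ∏ t, F (t, j t) ω * F (t, l t) ω) q μ := by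
  simp only [fun ω => prod_mul_eq_prod_pow_graphIndicator (F · ω)]
  exact memLp_prod_pow_of_map_eq_radMeasure hF hlaw _ q

lemma integral_prod_mul_of_iIndepFun (hF : ∀ p, AEMeasurable (F p) μ) (hind : iIndepFun F μ)
    (hlaw : ∀ p, μ.map (F p) = radMeasure) (j l : ι → α) :
    ∫ ω, ∏ t, F (t, j t) ω * F (t, l t) ω ∂μ = if j = l then 1 else 0 := by
  simp only [fun ω => prod_mul_eq_prod_pow_graphIndicator (F · ω),
    integral_prod_pow_of_iIndepFun hF hind hlaw, forall_even_graphIndicator_add_iff]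

lemma integral_prod_mul_mul_prod_mul_of_iIndepFun (hF : ∀ p, AEMeasurable (F p) μ)
    (hind : iIndepFun F μ) (hlaw : ∀ p, μ.map (F p) = radMeasure) (j k l : ι → α) :
    ∫ ω, (∏ t, F (t, j t) ω * F (t, l t) ω) * ∏ t, F (t, k t) ω * F (t, l t) ω ∂μ =
      if j = k then 1 else 0 := by
  have hexp : ∀ p, graphIndicator j p + graphIndicator l p +
      (graphIndicator k p + graphIndicator l p) =
        graphIndicator j p + graphIndicator k p + 2 * graphIndicator l p := fun p => by ring
  have hpar : ∀ m n : ℕ, Even (m + 2 * n) ↔ Even m := fun m n =>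
    Nat.even_add.trans (iff_true_right (even_two_mul n))
  simp only [fun ω => prod_mul_eq_prod_pow_graphIndicator (F · ω), ← Finset.prod_mul_distrib,
    ← pow_add, hexp, integral_prod_pow_of_iIndepFun hF hind hlaw, hpar,
    forall_even_graphIndicator_add_iff]

end RademacherMonomial

theorem diag_estimator_variance_rademacher_general
    {M d : ℕ}
    (a : (Fin (M + 1) → Fin d) → ℝ)
    {Ω : Type*} [MeasureSpace Ω] [IsProbabilityMeasure (ℙ : Measure Ω)]
    (g : Fin M → Fin d → Ω → ℝ)
    (hmeas : ∀ n i, Measurable (g n i))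
    (hindep : iIndepFun (fun p : Fin M × Fin d => g p.1 p.2) ℙ)
    (hdist : ∀ n i, Measure.map (g n i) ℙ = radMeasure)
    (i : Fin d) :
    variance (diagEstimator a g i) ℙ =
      (∑ j : Fin M → Fin d, (a (Fin.snoc j i)) ^ 2) - (a (fun _ => i)) ^ 2 := by
  set F : Fin M × Fin d → Ω → ℝ := fun p => g p.1 p.2
  have hF : ∀ p, AEMeasurable (F p) ℙ := fun p => (hmeas p.1 p.2).aemeasurable
  have hlaw : ∀ p, Measure.map (F p) ℙ = radMeasure := fun p => hdist p.1 p.2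
  have hsnoc : Fin.snoc (fun _ => i) i = fun _ : Fin (M + 1) => i := by
    ext t
    refine Fin.lastCases ?_ (fun t => ?_) t <;> simp
  change variance (fun ω => ∑ j, a (Fin.snoc j i) * ∏ t, F (t, j t) ω * F (t, i) ω) ℙ = _
  rw [variance_sum_mul_of_orthonormal (fun j => memLp_prod_mul hF hlaw j _ 2) (fun _ => i)
    (integral_prod_mul_of_iIndepFun hF hindep hlaw · _)
    (integral_prod_mul_mul_prod_mul_of_iIndepFun hF hindep hlaw · · _), hsnoc]

theorem diag_estimator_variance_rademacher
    {M d : ℕ} (hM : 1 ≤ M) (hd : 1 ≤ d)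
    (a : (Fin (M + 1) → Fin d) → ℝ)
    {Ω : Type*} [MeasureSpace Ω] [IsProbabilityMeasure (ℙ : Measure Ω)]
    (g : Fin M → Fin d → Ω → ℝ)
    (hmeas : ∀ n i, Measurable (g n i))
    (hindep : iIndepFun (fun p : Fin M × Fin d => g p.1 p.2) ℙ)
    (hdist : ∀ n i, Measure.map (g n i) ℙ = radMeasure)
    (i : Fin d) :
    variance (diagEstimator a g i) ℙ =
      (∑ j : Fin M → Fin d, (a (Fin.snoc j i)) ^ 2) - (a (fun _ => i)) ^ 2 :=
  diag_estimator_variance_rademacher_general a g hmeas hindep hdist i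
end

section
/- The trace estimator is an unbiased estimator of the trace of the tensor: E[X] = tr(A) = Σ_{i=1}^d a_{i,…,i}. -/
open MeasureTheory ProbabilityTheory Finset

/-- The trace estimator `X = Σ_i y_i`. -/
noncomputable def traceEstimator {M d : ℕ} (a : (Fin (M + 1) → Fin d) → ℝ)
    {Ω : Type*} (g : Fin M → Fin d → Ω → ℝ) (ω : Ω) : ℝ :=
  ∑ i : Fin d, diagEstimator a g i ω

/-!
Each summand of `X` is `a (snoc j i)` times the monomial `∏ t, g t (j t) * g t i`. Collecting
equal factors, this monomial is `∏ (t, k), g t k ^ m (t, k)` with exponents `m ≤ 2`, so by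
independence its expectation is `∏ E[g t k ^ m (t, k)]`. If `j` is constantly `i`, every exponent
is `0` or `2` and the expectation is `1`; otherwise some `j t ≠ i`, the factor `g t i` occurs
exactly once and its mean `0` kills the product. Only the diagonal entries of `A` survive.
-/

section

variable {ι Ω : Type*} {mΩ : MeasurableSpace Ω} {μ : Measure Ω}

lemma ProbabilityTheory.iIndepFun.integrable_finsetProd_s11 {f : ι → Ω → ℝ} (hindep : iIndepFun f μ)
    (hmeas : ∀ i, Measurable (f i)) (hint : ∀ i, Integrable (f i) μ) (s : Finset ι) :
    Integrable (∏ i ∈ s, f i) μ := by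
  classical
  have := hindep.isProbabilityMeasure
  induction s using Finset.induction_on with
  | empty => exact integrable_const 1
  | insert i s hi ih =>
    rw [Finset.prod_insert hi]
    exact (hindep.indepFun_finsetProd_of_notMem hmeas hi).symm.integrable_mul (hint i) ih

lemma integrable_pow_of_integrable_sq [IsFiniteMeasure μ] {f : Ω → ℝ}
    (hf : AEStronglyMeasurable f μ) (hsq : Integrable (fun ω => f ω ^ 2) μ) {n : ℕ}
    (hn : n ≤ 2) : Integrable (fun ω => f ω ^ n) μ := by
  interval_cases n
  · simp
  · simpa using ((memLp_two_iff_integrable_sq hf).2 hsq).integrable one_le_two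
  · exact hsq

end

def factorMultiplicity {M d : ℕ} (j : Fin M → Fin d) (i : Fin d) (p : Fin M × Fin d) : ℕ :=
  (if j p.1 = p.2 then 1 else 0) + (if i = p.2 then 1 else 0)

lemma factorMultiplicity_le_two {M d : ℕ} (j : Fin M → Fin d) (i : Fin d) (p : Fin M × Fin d) :
    factorMultiplicity j i p ≤ 2 := by
  unfold factorMultiplicity; split_ifs <;> norm_num

lemma prod_mul_eq_prod_pow_factorMultiplicity {M d : ℕ} {R : Type*} [CommMonoid R]
    (x : Fin M → Fin d → R) (j : Fin M → Fin d) (i : Fin d) :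
    ∏ t, x t (j t) * x t i = ∏ p : Fin M × Fin d, x p.1 p.2 ^ factorMultiplicity j i p := by
  simp only [Fintype.prod_prod_type, factorMultiplicity, pow_add, Finset.prod_mul_distrib,
    Finset.prod_pow_boole, Finset.mem_univ, if_true]

lemma Fin.snoc_const {n : ℕ} {α : Type*} (x : α) :
    (Fin.snoc (fun _ => x) x : Fin (n + 1) → α) = fun _ => x := by
  funext k
  simp [Fin.snoc]

section

variable {M d : ℕ} {Ω : Type*} {mΩ : MeasurableSpace Ω} {μ : Measure Ω} [IsProbabilityMeasure μ]
  {g : Fin M → Fin d → Ω → ℝ} (a : (Fin (M + 1) → Fin d) → ℝ)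

lemma integrable_prod_mul_of_iIndepFun (hmeas : ∀ n i, Measurable (g n i))
    (hindep : iIndepFun (fun p : Fin M × Fin d => g p.1 p.2) μ)
    (hsecond : ∀ n i, ∫ ω, g n i ω ^ 2 ∂μ = 1) (j : Fin M → Fin d) (i : Fin d) :
    Integrable (fun ω => ∏ t, g t (j t) ω * g t i ω) μ := by
  have hpow : ∀ p : Fin M × Fin d,
      Integrable (fun ω => g p.1 p.2 ω ^ factorMultiplicity j i p) μ := fun p =>
    integrable_pow_of_integrable_sq (hmeas p.1 p.2).aestronglyMeasurable
      (.of_integral_ne_zero (by simp [hsecond])) (factorMultiplicity_le_two j i p)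
  have hprod := (hindep.comp (fun p x => x ^ factorMultiplicity j i p)
    fun _ => by fun_prop).integrable_finsetProd_s11 (fun p => by fun_prop) hpow Finset.univ
  convert hprod using 1
  ext ω
  simp [Finset.prod_apply, prod_mul_eq_prod_pow_factorMultiplicity (fun t k => g t k ω)]

lemma integral_prod_mul_of_iIndepFun_s11 (hmeas : ∀ n i, Measurable (g n i))
    (hindep : iIndepFun (fun p : Fin M × Fin d => g p.1 p.2) μ)
    (hmean : ∀ n i, ∫ ω, g n i ω ∂μ = 0) (hsecond : ∀ n i, ∫ ω, g n i ω ^ 2 ∂μ = 1)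
    (j : Fin M → Fin d) (i : Fin d) :
    ∫ ω, ∏ t, g t (j t) ω * g t i ω ∂μ = if j = fun _ => i then 1 else 0 := by
  simp_rw [fun ω => prod_mul_eq_prod_pow_factorMultiplicity (fun t k => g t k ω) j i]
  rw [hindep.integral_fun_prod_comp (f := fun p x => x ^ factorMultiplicity j i p)
    (fun p => (hmeas p.1 p.2).aemeasurable) fun p => by fun_prop]
  split_ifs with hj
  · subst hj
    refine Finset.prod_eq_one fun p _ => ?_
    by_cases hp : i = p.2 <;> simp [factorMultiplicity, hp, hsecond]
  · obtain ⟨t, ht⟩ : ∃ t, j t ≠ i := by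
      by_contra! h; exact hj (funext h)
    exact Finset.prod_eq_zero (Finset.mem_univ (t, i)) (by simp [factorMultiplicity, ht, hmean])

lemma integrable_diagEstimator (hmeas : ∀ n i, Measurable (g n i))
    (hindep : iIndepFun (fun p : Fin M × Fin d => g p.1 p.2) μ)
    (hsecond : ∀ n i, ∫ ω, g n i ω ^ 2 ∂μ = 1) (i : Fin d) :
    Integrable (diagEstimator a g i) μ :=
  integrable_finsetSum _ fun j _ => (integrable_prod_mul_of_iIndepFun hmeas hindep hsecond j i).const_mul _

lemma integral_diagEstimator_s11 (hmeas : ∀ n i, Measurable (g n i))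
    (hindep : iIndepFun (fun p : Fin M × Fin d => g p.1 p.2) μ)
    (hmean : ∀ n i, ∫ ω, g n i ω ∂μ = 0) (hsecond : ∀ n i, ∫ ω, g n i ω ^ 2 ∂μ = 1)
    (i : Fin d) :
    ∫ ω, diagEstimator a g i ω ∂μ = a (fun _ => i) := by
  unfold diagEstimator
  rw [integral_finsetSum _ fun j _ => (integrable_prod_mul_of_iIndepFun hmeas hindep hsecond j i).const_mul _]
  simp [integral_const_mul, integral_prod_mul_of_iIndepFun_s11 hmeas hindep hmean hsecond, Fin.snoc_const]

end

theorem trace_estimator_unbiased_general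
    {M d : ℕ}
    (a : (Fin (M + 1) → Fin d) → ℝ)
    {Ω : Type*} [MeasureSpace Ω] [IsProbabilityMeasure (ℙ : Measure Ω)]
    (g : Fin M → Fin d → Ω → ℝ)
    (hmeas : ∀ n i, Measurable (g n i))
    (hindep : iIndepFun (fun p : Fin M × Fin d => g p.1 p.2) ℙ)
    (hmean : ∀ n i, ∫ ω, g n i ω ∂ℙ = 0)
    (hsecond : ∀ n i, ∫ ω, (g n i ω) ^ 2 ∂ℙ = 1)
    :
    ∫ ω, traceEstimator a g ω ∂ℙ = ∑ i : Fin d, a (fun _ => i) := by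
  unfold traceEstimator
  rw [integral_finsetSum _ fun i _ => integrable_diagEstimator a hmeas hindep hsecond i]
  simp_rw [integral_diagEstimator_s11 a hmeas hindep hmean hsecond]

theorem trace_estimator_unbiased
    {M d : ℕ} (hM : 1 ≤ M) (hd : 1 ≤ d)
    (a : (Fin (M + 1) → Fin d) → ℝ)
    {Ω : Type*} [MeasureSpace Ω] [IsProbabilityMeasure (ℙ : Measure Ω)]
    (g : Fin M → Fin d → Ω → ℝ)
    (hmeas : ∀ n i, Measurable (g n i))
    (hindep : iIndepFun (fun p : Fin M × Fin d => g p.1 p.2) ℙ)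
    (hident : ∀ n i n' i', IdentDistrib (g n i) (g n' i') ℙ ℙ)
    (hmean : ∀ n i, ∫ ω, g n i ω ∂ℙ = 0)
    (hsecond : ∀ n i, ∫ ω, (g n i ω) ^ 2 ∂ℙ = 1)
    (hfourth : ∀ n i, Integrable (fun ω => (g n i ω) ^ 4) ℙ)
    :
    ∫ ω, traceEstimator a g ω ∂ℙ = ∑ i : Fin d, a (fun _ => i) :=
  trace_estimator_unbiased_general a g hmeas hindep hmean hsecond
end
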